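/- Let H be a self-adjoint operator on a finite-dimensional complex Hilbert space and let W : ℝ → ℝ be an odd function such that both W and s ↦ s·W(s) are integrable on ℝ. Then for every operator B: ∫_ℝ W(s) e^{iHs} B e^{−iHs} ds = i ∫_ℝ W(s) ( ∫₀^s e^{iHu} [H, B] e^{−iHu} du ) ds. -/

import Mathlib

/-!
Differentiating `u ↦ e^{iHu} B e^{-iHu}` gives `i e^{iHu} [H, B] e^{-iHu}`, so by the fundamental
theorem of calculus the inner integral on the right is `-i (e^{iHs} B e^{-iHs} - B)`. Integrating
against `W`, the constant term contributes `(∫ W) B = 0` because `W` is odd; integrability of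
`W(s) e^{iHs} B e^{-iHs}` comes from `e^{iHs}` being unitary.
-/

open ContinuousLinearMap MeasureTheory

noncomputable section

variable {ℋ : Type*} [NormedAddCommGroup ℋ] [InnerProductSpace ℂ ℋ] [FiniteDimensional ℂ ℋ]

/-- Heisenberg evolution `e^{iHu} B e^{-iHu}` of an operator `B`. -/
def heis (H B : ℋ →L[ℂ] ℋ) (u : ℝ) : ℋ →L[ℂ] ℋ :=
  NormedSpace.exp ((Complex.I * u) • H) * B * NormedSpace.exp ((-Complex.I * u) • H)

open NormedSpace Complex

theorem Function.Odd.integral_eq_zero {G E : Type*} [NormedAddCommGroup E] [NormedSpace ℝ E]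
    [MeasurableSpace G] [AddGroup G] [MeasurableNeg G] {μ : Measure G} [μ.IsNegInvariant]
    {f : G → E} (hf : f.Odd) : ∫ x, f x ∂μ = 0 := by
  have : IsAddTorsionFree E := .of_isTorsionFree ℝ E
  rw [← self_eq_neg, ← integral_neg, ← integral_neg_eq_self _ μ]
  simp only [hf.eq]

section BanachAlgebra

variable {A : Type*} [NormedRing A] [NormedAlgebra ℂ A] [CompleteSpace A]

theorem hasDerivAt_exp_I_mul_smul (a : A) (u : ℝ) :
    HasDerivAt (fun v : ℝ => exp ((I * v) • a)) (exp ((I * u) • a) * (I • a)) u := by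
  have h := (hasDerivAt_exp_smul_const (I • a) (u : ℂ)).hasFDerivAt.restrictScalars ℝ
    |>.comp_hasDerivAt u ofRealCLM.hasDerivAt
  simpa [smul_smul, mul_comm _ I, Function.comp_def] using h

theorem hasDerivAt_exp_mul_mul_exp (a b : A) (u : ℝ) :
    HasDerivAt (fun v : ℝ => exp ((I * v) • a) * b * exp ((-I * v) • a))
      (I • (exp ((I * u) • a) * (a * b - b * a) * exp ((-I * u) • a))) u := by
  have hg : HasDerivAt (fun v : ℝ => exp ((-I * v) • a)) (-(exp ((-I * u) • a) * (I • a))) u := by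
    simpa [Function.comp_def] using (hasDerivAt_exp_I_mul_smul a (-u)).scomp u (hasDerivAt_neg u)
  refine (((hasDerivAt_exp_I_mul_smul a u).mul_const b).mul hg).congr_deriv ?_
  have hcomm : exp ((-I * u) • a) * a = a * exp ((-I * u) • a) :=
    ((Commute.refl a).smul_left _).exp_left.eq
  simp only [smul_mul_assoc, mul_smul_comm, mul_assoc, hcomm, mul_sub, sub_mul, smul_sub, mul_neg]
  abel

end BanachAlgebra

section CStarAlgebra

variable {A : Type*} [NormedRing A] [NormedAlgebra ℂ A] [StarRing A] [CStarRing A]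
  [StarModule ℂ A]

theorem IsSelfAdjoint.star_exp_I_mul_smul {a : A} (ha : IsSelfAdjoint a) (u : ℝ) :
    star (NormedSpace.exp ((I * u) • a)) = NormedSpace.exp ((-I * u) • a) := by
  rw [star_exp, star_smul, ha.star_eq, star_mul', Complex.star_def, conj_I, conj_ofReal]

theorem IsSelfAdjoint.exp_I_mul_smul_mem_unitary [CompleteSpace A] {a : A} (ha : IsSelfAdjoint a)
    (u : ℝ) : NormedSpace.exp ((I * u) • a) ∈ unitary A := by
  have h : NormedSpace.exp (I • u • a) ∈ unitary A :=
    (selfAdjoint.expUnitary ⟨u • a, (IsSelfAdjoint.all u).smul ha⟩).2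
  rwa [← Complex.coe_smul, smul_smul] at h

theorem IsSelfAdjoint.norm_exp_mul_mul_exp [CompleteSpace A] {a : A} (ha : IsSelfAdjoint a)
    (b : A) (u : ℝ) :
    ‖NormedSpace.exp ((I * u) • a) * b * NormedSpace.exp ((-I * u) • a)‖ = ‖b‖ := by
  have hU := ha.exp_I_mul_smul_mem_unitary u
  rw [← ha.star_exp_I_mul_smul, CStarRing.norm_mul_mem_unitary _ (Unitary.star_mem hU),
    CStarRing.norm_mem_unitary_mul _ hU]

end CStarAlgebra

theorem hasDerivAt_heis (H B : ℋ →L[ℂ] ℋ) (u : ℝ) :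
    HasDerivAt (heis H B) (I • heis H (H * B - B * H) u) u :=
  hasDerivAt_exp_mul_mul_exp H B u

theorem continuous_heis (H B : ℋ →L[ℂ] ℋ) : Continuous (heis H B) :=
  continuous_iff_continuousAt.2 fun u => (hasDerivAt_heis H B u).continuousAt

theorem heis_zero (H B : ℋ →L[ℂ] ℋ) : heis H B 0 = B := by
  simp [heis]

theorem heis_sub_eq_I_smul_integral (H B : ℋ →L[ℂ] ℋ) (u : ℝ) :
    heis H B u - B = I • ∫ w in (0 : ℝ)..u, heis H (H * B - B * H) w := by
  rw [← intervalIntegral.integral_smul, intervalIntegral.integral_eq_sub_of_hasDerivAt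
    (fun w _ => hasDerivAt_heis H B w)
    (((continuous_heis _ _).const_smul I).intervalIntegrable 0 u), heis_zero]

theorem norm_heis {H : ℋ →L[ℂ] ℋ} (hH : IsSelfAdjoint H) (B : ℋ →L[ℂ] ℋ) (u : ℝ) :
    ‖heis H B u‖ = ‖B‖ :=
  hH.norm_exp_mul_mul_exp B u

theorem integrable_smul_heis {H : ℋ →L[ℂ] ℋ} (hH : IsSelfAdjoint H) (B : ℋ →L[ℂ] ℋ) {W : ℝ → ℝ}
    (hW : Integrable W) : Integrable (fun u => W u • heis H B u) :=
  hW.smul_bdd ‖B‖ (continuous_heis H B).aestronglyMeasurable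
    (ae_of_all _ fun u => (norm_heis hH B u).le)

theorem stmt10_general (H B : ℋ →L[ℂ] ℋ) (hH : IsSelfAdjoint H)
    (W : ℝ → ℝ) (hodd : ∀ u : ℝ, W (-u) = -W u)
    (hW1 : Integrable W) :
    ∫ u : ℝ, W u • heis H B u =
      Complex.I • ∫ u : ℝ, W u • (∫ w in (0:ℝ)..u, heis H (H * B - B * H) w) := by
  calc ∫ u, W u • heis H B u
      = (∫ u, W u • heis H B u) - (∫ u, W u) • B := by
        rw [Function.Odd.integral_eq_zero hodd, zero_smul, sub_zero]
    _ = ∫ u, (W u • heis H B u - W u • B) := by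
        rw [integral_sub (integrable_smul_heis hH B hW1) (hW1.smul_const B), integral_smul_const]
    _ = ∫ u, I • W u • ∫ w in (0 : ℝ)..u, heis H (H * B - B * H) w := by
        simp_rw [← smul_sub, heis_sub_eq_I_smul_integral, smul_comm (W _) I]
    _ = I • ∫ u, W u • ∫ w in (0 : ℝ)..u, heis H (H * B - B * H) w := integral_smul _ _

/-- for a self-adjoint `H` on a finite-dimensional complex Hilbert space and an
odd function `W` with `W` and `s·W(s)` integrable,
`∫ W(s) e^{iHs} B e^{-iHs} ds = i ∫ W(s) (∫₀^s e^{iHu} [H,B] e^{-iHu} du) ds`. -/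
theorem stmt10 (H B : ℋ →L[ℂ] ℋ) (hH : IsSelfAdjoint H)
    (W : ℝ → ℝ) (hodd : ∀ u : ℝ, W (-u) = -W u)
    (hW1 : Integrable W) (hW2 : Integrable (fun u : ℝ => u * W u)) :
    ∫ u : ℝ, W u • heis H B u =
      Complex.I • ∫ u : ℝ, W u • (∫ w in (0:ℝ)..u, heis H (H * B - B * H) w) :=
  stmt10_general H B hH W hodd hW1
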